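/- arXiv:2304.01727 — 5 statements merged into one kernel-verified Lean document; each statement's English description precedes it below -/
import Mathlib

section
/- Let n ≥ 1, let Σ and Q be n×n real symmetric positive definite matrices, A an n×n real matrix, m ∈ ℝⁿ, and μ ≥ 0 a real number such that Σ⁻¹ − 2μI is positive definite. Set S := (Σ⁻¹ − 2μI)⁻¹. Then A S Aᵀ + Q is positive definite and there exists a constant c > 0 such that for every x ∈ ℝⁿ: ∫_{ℝⁿ} exp(−(1/2)(x − A x')ᵀ Q⁻¹ (x − A x')) · exp(μ ‖x' − m‖²) · exp(−(1/2)(x' − m)ᵀ Σ⁻¹ (x' − m)) dx' = c · exp(−(1/2)(x − A m)ᵀ (A S Aᵀ + Q)⁻¹ (x − A m)). (This is the time-update step of the risk-sensitive filter: the predicted mean is Am and the predicted covariance is A(Σ⁻¹ − 2μI)⁻¹Aᵀ + Q.) -/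
open MeasureTheory Matrix Real

/-!
Shifting the integration variable by `m`, the risk term `μ‖y‖²` merges with the prior into the
quadratic form of `T = Σ⁻¹ - 2μI`, so the integrand is a product of two Gaussians in `y`. Their
joint exponent has Hessian `M = AᵀQ⁻¹A + T`; completing the square leaves the constant
`c = ∫ exp(-½ yᵀMy)` times `exp(-½ uᵀ(Q⁻¹ - Q⁻¹AM⁻¹AᵀQ⁻¹)u)` with `u = x - Am`, and the Woodbury
identity turns the middle matrix into `(AT⁻¹Aᵀ + Q)⁻¹`. Writing `M = BᵀB` exhibits `c` as the
standard Gaussian integral after a linear change of variables, so it is finite and positive.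
-/

namespace Matrix

lemma PosDef.isSymm {ι : Type*} {M : Matrix ι ι ℝ} (hM : M.PosDef) : M.IsSymm := by
  simpa [IsSymm, IsHermitian, conjTranspose_eq_transpose_of_trivial] using hM.isHermitian

section Fintype

variable {ι κ : Type*} [Fintype ι] [Fintype κ]

lemma mulVec_dotProduct (C : Matrix κ ι ℝ) (u : ι → ℝ) (w : κ → ℝ) :
    (C *ᵥ u) ⬝ᵥ w = u ⬝ᵥ Cᵀ *ᵥ w := by
  rw [dotProduct_comm, dotProduct_mulVec, mulVec_transpose, dotProduct_comm]

lemma PosSemidef.transpose_mul_mul_add {R : Matrix κ κ ℝ} {T : Matrix ι ι ℝ} (hR : R.PosSemidef)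
    (hT : T.PosDef) (B : Matrix κ ι ℝ) : (Bᵀ * R * B + T).PosDef := by
  simpa [conjTranspose_eq_transpose_of_trivial] using
    PosDef.posSemidef_add (hR.conjTranspose_mul_mul_same B) hT

lemma IsSymm.dotProduct_mulVec_sub_sub {M : Matrix ι ι ℝ} (hM : M.IsSymm) (u v : ι → ℝ) :
    (u - v) ⬝ᵥ M *ᵥ (u - v) = u ⬝ᵥ M *ᵥ u - 2 * (u ⬝ᵥ M *ᵥ v) + v ⬝ᵥ M *ᵥ v := by
  have hvu : v ⬝ᵥ M *ᵥ u = u ⬝ᵥ M *ᵥ v := by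
    rw [dotProduct_comm, mulVec_dotProduct, hM.eq]
  rw [mulVec_sub, dotProduct_sub, sub_dotProduct, sub_dotProduct, hvu]
  ring

lemma integrable_exp_neg_half_dotProduct_self :
    Integrable (fun z : ι → ℝ => exp (-(1/2) * (z ⬝ᵥ z))) := by
  have hprod : ∀ z : ι → ℝ, exp (-(1/2) * (z ⬝ᵥ z)) = ∏ i, exp (-(1/2) * z i ^ 2) := by
    intro z
    rw [← exp_sum, dotProduct, Finset.mul_sum]
    simp only [sq]
  simp_rw [hprod]
  exact Integrable.fintype_prod (f := fun _ x => exp (-(1/2) * x ^ 2))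
    fun _ => by simpa using integrable_exp_neg_mul_sq (by norm_num : (0:ℝ) < 1/2)

end Fintype

variable {ι κ : Type*} [Fintype ι] [Fintype κ] [DecidableEq ι] [DecidableEq κ]

lemma integrable_comp_mulVec {B : Matrix ι ι ℝ} (hB : B.det ≠ 0) {g : (ι → ℝ) → ℝ}
    (hg : Integrable g) : Integrable (fun y => g (B *ᵥ y)) := by
  have hmap : Integrable g (Measure.map (toLin' B) volume) := by
    rw [Real.map_matrix_volume_pi_eq_smul_volume_pi hB]
    exact hg.smul_measure ENNReal.ofReal_ne_top
  exact (integrable_map_measure hmap.1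
    (LinearMap.continuous_of_finiteDimensional _).aemeasurable).mp hmap

open scoped MatrixOrder in
lemma PosDef.integrable_exp_neg_half_quadratic {M : Matrix ι ι ℝ} (hM : M.PosDef) :
    Integrable (fun y : ι → ℝ => exp (-(1/2) * (y ⬝ᵥ M *ᵥ y))) := by
  obtain ⟨B, rfl⟩ := CStarAlgebra.nonneg_iff_eq_star_mul_self.mp hM.posSemidef.nonneg
  have hB : B.det ≠ 0 := fun h => hM.det_pos.ne' (by simp [det_mul, h])
  have hsq : ∀ y, y ⬝ᵥ (star B * B) *ᵥ y = (B *ᵥ y) ⬝ᵥ (B *ᵥ y) := fun y => by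
    rw [← mulVec_mulVec, star_eq_conjTranspose, conjTranspose_eq_transpose_of_trivial,
      ← mulVec_dotProduct]
  simp_rw [hsq]
  exact integrable_comp_mulVec hB integrable_exp_neg_half_dotProduct_self

lemma PosDef.integral_exp_neg_half_quadratic_pos {M : Matrix ι ι ℝ} (hM : M.PosDef) :
    0 < ∫ y : ι → ℝ, exp (-(1/2) * (y ⬝ᵥ M *ᵥ y)) := by
  rw [integral_pos_iff_support_of_nonneg (fun _ => (exp_pos _).le)
    hM.integrable_exp_neg_half_quadratic]
  simp only [Function.support, (exp_pos _).ne', ne_eq, not_false_eq_true, Set.ofPred_true]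
  exact isOpen_univ.measure_pos volume Set.univ_nonempty

lemma PosDef.integral_exp_neg_half_quadratic_add_linear {M : Matrix ι ι ℝ} (hM : M.PosDef)
    (b : ι → ℝ) :
    ∫ y : ι → ℝ, exp (-(1/2) * (y ⬝ᵥ M *ᵥ y) + b ⬝ᵥ y)
      = (∫ y : ι → ℝ, exp (-(1/2) * (y ⬝ᵥ M *ᵥ y))) * exp ((1/2) * (b ⬝ᵥ M⁻¹ *ᵥ b)) := by
  set a := M⁻¹ *ᵥ b
  have hMa : M *ᵥ a = b := by
    rw [mulVec_mulVec, mul_nonsing_inv _ (isUnit_iff_ne_zero.mpr hM.det_pos.ne'), one_mulVec]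
  have hsquare : ∀ y, -(1/2) * (y ⬝ᵥ M *ᵥ y) + b ⬝ᵥ y
      = (1/2) * (b ⬝ᵥ M⁻¹ *ᵥ b) + -(1/2) * ((y - a) ⬝ᵥ M *ᵥ (y - a)) := fun y => by
    rw [hM.isSymm.dotProduct_mulVec_sub_sub, hMa, dotProduct_comm a b, dotProduct_comm y b]
    ring
  simp_rw [hsquare, exp_add, integral_const_mul]
  rw [integral_sub_right_eq_self (fun y => exp (-(1/2) * (y ⬝ᵥ M *ᵥ y))), mul_comm]

lemma integral_exp_quadratic_sub_mulVec_mul_exp_quadratic {Q : Matrix κ κ ℝ} {T : Matrix ι ι ℝ}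
    (hQ : Q.PosDef) (hT : T.PosDef) (A : Matrix κ ι ℝ) (u : κ → ℝ) :
    ∫ y : ι → ℝ, exp (-(1/2) * ((u - A *ᵥ y) ⬝ᵥ Q⁻¹ *ᵥ (u - A *ᵥ y))) *
        exp (-(1/2) * (y ⬝ᵥ T *ᵥ y))
      = (∫ y : ι → ℝ, exp (-(1/2) * (y ⬝ᵥ (Aᵀ * Q⁻¹ * A + T) *ᵥ y))) *
          exp (-(1/2) * (u ⬝ᵥ (A * T⁻¹ * Aᵀ + Q)⁻¹ *ᵥ u)) := by
  set R := Q⁻¹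
  have hR : R.PosDef := hQ.inv
  set M := Aᵀ * R * A + T
  have hM : M.PosDef := hR.posSemidef.transpose_mul_mul_add hT A
  have hcross : ∀ y, u ⬝ᵥ R *ᵥ (A *ᵥ y) = ((Aᵀ * R) *ᵥ u) ⬝ᵥ y := fun y => by
    rw [mulVec_dotProduct, transpose_mul, transpose_transpose, hR.isSymm.eq, mulVec_mulVec]
  have hquad : ∀ y, (A *ᵥ y) ⬝ᵥ R *ᵥ (A *ᵥ y) = y ⬝ᵥ (Aᵀ * R * A) *ᵥ y := fun y => by
    rw [mulVec_dotProduct, mulVec_mulVec, mulVec_mulVec, Matrix.mul_assoc]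
  have hexponent : ∀ y, -(1/2) * ((u - A *ᵥ y) ⬝ᵥ R *ᵥ (u - A *ᵥ y)) + -(1/2) * (y ⬝ᵥ T *ᵥ y)
      = -(1/2) * (u ⬝ᵥ R *ᵥ u) + (-(1/2) * (y ⬝ᵥ M *ᵥ y) + ((Aᵀ * R) *ᵥ u) ⬝ᵥ y) := fun y => by
    rw [hR.isSymm.dotProduct_mulVec_sub_sub, hcross, hquad, add_mulVec, dotProduct_add]
    ring
  have hwoodbury : (A * T⁻¹ * Aᵀ + Q)⁻¹ = R - R * A * M⁻¹ * (Aᵀ * R) := by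
    have hTinv : T⁻¹⁻¹ = T := nonsing_inv_nonsing_inv T (isUnit_iff_ne_zero.mpr hT.det_pos.ne')
    rw [add_comm, add_mul_mul_inv_eq_sub _ _ _ _ hQ.isUnit hT.inv.isUnit
      (by rw [hTinv, add_comm]; exact hM.isUnit), hTinv, add_comm T, Matrix.mul_assoc _ Aᵀ]
  have hcompleted : ((Aᵀ * R) *ᵥ u) ⬝ᵥ M⁻¹ *ᵥ ((Aᵀ * R) *ᵥ u)
      = u ⬝ᵥ (R * A * M⁻¹ * (Aᵀ * R)) *ᵥ u := by
    rw [mulVec_dotProduct, transpose_mul, transpose_transpose, hR.isSymm.eq, mulVec_mulVec,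
      mulVec_mulVec, Matrix.mul_assoc R A, Matrix.mul_assoc]
  simp_rw [← exp_add, hexponent, exp_add (-(1/2) * (u ⬝ᵥ R *ᵥ u)), integral_const_mul]
  rw [hM.integral_exp_neg_half_quadratic_add_linear, hwoodbury, sub_mulVec, dotProduct_sub,
    hcompleted, mul_left_comm, ← exp_add]
  congr 2
  ring

end Matrix

theorem risk_sensitive_time_update_general (n : ℕ)
    (Sig Q A : Matrix (Fin n) (Fin n) ℝ) (m : Fin n → ℝ) (μ : ℝ)
    (hQ : Q.PosDef)
    (hpd : (Sig⁻¹ - (2 * μ) • (1 : Matrix (Fin n) (Fin n) ℝ)).PosDef) :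
    (A * (Sig⁻¹ - (2 * μ) • (1 : Matrix (Fin n) (Fin n) ℝ))⁻¹ * Aᵀ + Q).PosDef ∧
    ∃ c : ℝ, 0 < c ∧ ∀ x : Fin n → ℝ,
      (∫ x' : Fin n → ℝ,
          Real.exp (-(1/2) * ((x - A.mulVec x') ⬝ᵥ Q⁻¹.mulVec (x - A.mulVec x'))) *
          Real.exp (μ * ((x' - m) ⬝ᵥ (x' - m))) *
          Real.exp (-(1/2) * ((x' - m) ⬝ᵥ Sig⁻¹.mulVec (x' - m))))
        = c * Real.exp (-(1/2) * ((x - A.mulVec m) ⬝ᵥ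
            (A * (Sig⁻¹ - (2 * μ) • (1 : Matrix (Fin n) (Fin n) ℝ))⁻¹ * Aᵀ + Q)⁻¹.mulVec
            (x - A.mulVec m))) := by
  set T := Sig⁻¹ - (2 * μ) • (1 : Matrix (Fin n) (Fin n) ℝ)
  refine ⟨by simpa using hpd.inv.posSemidef.transpose_mul_mul_add hQ Aᵀ, _,
    (hQ.inv.posSemidef.transpose_mul_mul_add hpd A).integral_exp_neg_half_quadratic_pos,
    fun x => ?_⟩
  have hrisk : ∀ y, μ * (y ⬝ᵥ y) + -(1/2) * (y ⬝ᵥ Sig⁻¹ *ᵥ y) = -(1/2) * (y ⬝ᵥ T *ᵥ y) := by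
    intro y
    rw [sub_mulVec, smul_mulVec, one_mulVec, dotProduct_sub, dotProduct_smul, smul_eq_mul]
    ring
  have hshift : ∀ x' : Fin n → ℝ,
      exp (-(1/2) * ((x - A *ᵥ x') ⬝ᵥ Q⁻¹ *ᵥ (x - A *ᵥ x'))) *
        exp (μ * ((x' - m) ⬝ᵥ (x' - m))) * exp (-(1/2) * ((x' - m) ⬝ᵥ Sig⁻¹ *ᵥ (x' - m)))
      = exp (-(1/2) * ((x - A *ᵥ m - A *ᵥ (x' - m)) ⬝ᵥ Q⁻¹ *ᵥ (x - A *ᵥ m - A *ᵥ (x' - m)))) *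
        exp (-(1/2) * ((x' - m) ⬝ᵥ T *ᵥ (x' - m))) := fun x' => by
    have hresidual : x - A *ᵥ m - A *ᵥ (x' - m) = x - A *ᵥ x' := by
      rw [mulVec_sub A x' m, sub_sub_sub_cancel_right]
    rw [hresidual, mul_assoc, ← exp_add, hrisk]
  simp_rw [hshift]
  rw [integral_sub_right_eq_self (fun y => exp (-(1/2) * ((x - A *ᵥ m - A *ᵥ y) ⬝ᵥ
    Q⁻¹ *ᵥ (x - A *ᵥ m - A *ᵥ y))) * exp (-(1/2) * (y ⬝ᵥ T *ᵥ y)))]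
  exact integral_exp_quadratic_sub_mulVec_mul_exp_quadratic hQ hpd A _

/-- Time-update step of the risk-sensitive filter.
`x ⬝ᵥ x` is the squared Euclidean norm `‖x‖²`. -/
theorem risk_sensitive_time_update (n : ℕ) (hn : 1 ≤ n)
    (Sig Q A : Matrix (Fin n) (Fin n) ℝ) (m : Fin n → ℝ) (μ : ℝ) (hμ : 0 ≤ μ)
    (hSig : Sig.PosDef) (hSigSymm : Sig.IsSymm)
    (hQ : Q.PosDef) (hQSymm : Q.IsSymm)
    (hpd : (Sig⁻¹ - (2 * μ) • (1 : Matrix (Fin n) (Fin n) ℝ)).PosDef) :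
    (A * (Sig⁻¹ - (2 * μ) • (1 : Matrix (Fin n) (Fin n) ℝ))⁻¹ * Aᵀ + Q).PosDef ∧
    ∃ c : ℝ, 0 < c ∧ ∀ x : Fin n → ℝ,
      (∫ x' : Fin n → ℝ,
          Real.exp (-(1/2) * ((x - A.mulVec x') ⬝ᵥ Q⁻¹.mulVec (x - A.mulVec x'))) *
          Real.exp (μ * ((x' - m) ⬝ᵥ (x' - m))) *
          Real.exp (-(1/2) * ((x' - m) ⬝ᵥ Sig⁻¹.mulVec (x' - m))))
        = c * Real.exp (-(1/2) * ((x - A.mulVec m) ⬝ᵥ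
            (A * (Sig⁻¹ - (2 * μ) • (1 : Matrix (Fin n) (Fin n) ℝ))⁻¹ * Aᵀ + Q)⁻¹.mulVec
            (x - A.mulVec m))) :=
  risk_sensitive_time_update_general n Sig Q A m μ hQ hpd
end

section
/- Let n, p ≥ 1, let Q be an n×n real symmetric positive definite matrix, S a p×p real symmetric positive definite matrix, A an n×p real matrix, and m₀ ∈ ℝᵖ. Define G := S Aᵀ (A S Aᵀ + Q)⁻¹ and S₁ := S − G A S. Then A S Aᵀ + Q and S₁ are positive definite, and for all x ∈ ℝⁿ and x' ∈ ℝᵖ: N(x; A x', Q) · N(x'; m₀, S) = N(x; A m₀, A S Aᵀ + Q) · N(x'; m₀ + G(x − A m₀), S₁). -/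
open Matrix Real

/-- Gaussian probability density `N(x; m, P)` on `ℝᵈ`. -/
noncomputable def gaussPDF {d : ℕ} (m : Fin d → ℝ) (P : Matrix (Fin d) (Fin d) ℝ)
    (x : Fin d → ℝ) : ℝ :=
  (2 * Real.pi) ^ (-(d : ℝ) / 2) * P.det ^ (-(1 : ℝ) / 2) *
    Real.exp (-(1/2) * ((x - m) ⬝ᵥ P⁻¹.mulVec (x - m)))

lemma mulVec_dot {m n : Type*} [Fintype m] [Fintype n]
    (A : Matrix n m ℝ) (v : m → ℝ) (z : n → ℝ) :
    (A *ᵥ v) ⬝ᵥ z = v ⬝ᵥ (Aᵀ *ᵥ z) := by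
  rw [Matrix.dotProduct_mulVec, Matrix.vecMul_transpose]

lemma quad_key {m n : Type*} [Fintype m] [Fintype n]
    (Q' M' : Matrix n n ℝ) (S' K : Matrix m m ℝ) (A : Matrix n m ℝ) (G : Matrix m n ℝ)
    (h1 : K * G = Aᵀ * Q') (h2 : Gᵀ * K = Q' * A) (h3 : K = S' + Aᵀ * Q' * A)
    (h4 : Gᵀ * (K * G) = Q' - M') (u : n → ℝ) (v : m → ℝ) :
    (u - A *ᵥ v) ⬝ᵥ Q' *ᵥ (u - A *ᵥ v) + v ⬝ᵥ S' *ᵥ v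
      = u ⬝ᵥ M' *ᵥ u + (v - G *ᵥ u) ⬝ᵥ K *ᵥ (v - G *ᵥ u) := by
  simp only [Matrix.mulVec_sub, sub_dotProduct, dotProduct_sub,
    mulVec_dot, Matrix.mulVec_mulVec, ← Matrix.mul_assoc]
  rw [h1, h2, show Q' * A * G = Q' - M' by rw [← h2, Matrix.mul_assoc, h4], h3]
  simp only [Matrix.sub_mulVec, Matrix.add_mulVec, dotProduct_sub,
    dotProduct_add]
  ring

lemma real_aux (c1 c2 d1 d2 d3 d4 a1 a2 a3 a4 : ℝ) (hd : d1 * d2 = d3 * d4)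
    (ha : a1 + a2 = a3 + a4) :
    c1 * d1 * Real.exp a1 * (c2 * d2 * Real.exp a2)
      = c1 * d3 * Real.exp a3 * (c2 * d4 * Real.exp a4) := by
  calc c1 * d1 * Real.exp a1 * (c2 * d2 * Real.exp a2)
      = c1 * c2 * (d1 * d2) * Real.exp (a1 + a2) := by rw [Real.exp_add]; ring
  _ = c1 * c2 * (d3 * d4) * Real.exp (a3 + a4) := by rw [hd, ha]
  _ = c1 * d3 * Real.exp a3 * (c2 * d4 * Real.exp a4) := by rw [Real.exp_add]; ring

lemma gauss_mul_aux {n p : ℕ} (Q M : Matrix (Fin n) (Fin n) ℝ)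
    (S S₁ K : Matrix (Fin p) (Fin p) ℝ)
    (A : Matrix (Fin n) (Fin p) ℝ) (G : Matrix (Fin p) (Fin n) ℝ) (m₀ : Fin p → ℝ)
    (hS1inv : S₁⁻¹ = K)
    (hdet : Q.det ^ (-(1:ℝ)/2) * S.det ^ (-(1:ℝ)/2)
      = M.det ^ (-(1:ℝ)/2) * S₁.det ^ (-(1:ℝ)/2))
    (hquad : ∀ u v, (u - A *ᵥ v) ⬝ᵥ Q⁻¹ *ᵥ (u - A *ᵥ v) + v ⬝ᵥ S⁻¹ *ᵥ v
      = u ⬝ᵥ M⁻¹ *ᵥ u + (v - G *ᵥ u) ⬝ᵥ K *ᵥ (v - G *ᵥ u))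
    (x : Fin n → ℝ) (x' : Fin p → ℝ) :
    gaussPDF (A *ᵥ x') Q x * gaussPDF m₀ S x' =
      gaussPDF (A *ᵥ m₀) M x * gaussPDF (m₀ + G *ᵥ (x - A *ᵥ m₀)) S₁ x' := by
  have e1 : x - A *ᵥ x' = (x - A *ᵥ m₀) - A *ᵥ (x' - m₀) := by
    rw [Matrix.mulVec_sub]; abel
  have e2 : x' - (m₀ + G *ᵥ (x - A *ᵥ m₀)) = (x' - m₀) - G *ᵥ (x - A *ᵥ m₀) := by
    abel
  have hq := hquad (x - A *ᵥ m₀) (x' - m₀)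
  simp only [gaussPDF, hS1inv, e1, e2]
  exact real_aux _ _ _ _ _ _ _ _ _ _ hdet (by linarith)

/-- Gaussian product theorem. -/
theorem gaussian_product (n p : ℕ) (hn : 1 ≤ n) (hp : 1 ≤ p)
    (Q : Matrix (Fin n) (Fin n) ℝ) (S : Matrix (Fin p) (Fin p) ℝ)
    (A : Matrix (Fin n) (Fin p) ℝ) (m₀ : Fin p → ℝ)
    (hQ : Q.PosDef) (hQSymm : Q.IsSymm) (hS : S.PosDef) (hSSymm : S.IsSymm) :
    (A * S * Aᵀ + Q).PosDef ∧
    (S - (S * Aᵀ * (A * S * Aᵀ + Q)⁻¹) * A * S).PosDef ∧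
    ∀ (x : Fin n → ℝ) (x' : Fin p → ℝ),
      gaussPDF (A.mulVec x') Q x * gaussPDF m₀ S x' =
        gaussPDF (A.mulVec m₀) (A * S * Aᵀ + Q) x *
        gaussPDF (m₀ + (S * Aᵀ * (A * S * Aᵀ + Q)⁻¹).mulVec (x - A.mulVec m₀))
          (S - (S * Aᵀ * (A * S * Aᵀ + Q)⁻¹) * A * S) x' := by
  set M := A * S * Aᵀ + Q with hMdef
  have hASAt : (A * S * Aᵀ).PosSemidef := by
    have h := hS.posSemidef.mul_mul_conjTranspose_same A
    simpa [Matrix.conjTranspose_eq_transpose_of_trivial] using h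
  have hM : M.PosDef := Matrix.PosDef.posSemidef_add hASAt hQ
  have hQd : IsUnit Q.det := hQ.det_pos.ne'.isUnit
  have hSd : IsUnit S.det := hS.det_pos.ne'.isUnit
  have hMd : IsUnit M.det := hM.det_pos.ne'.isUnit
  set G := S * Aᵀ * M⁻¹ with hGdef
  set K := S⁻¹ + Aᵀ * Q⁻¹ * A with hKdef
  have hKpd : K.PosDef := by
    refine Matrix.PosDef.add_posSemidef hS.inv ?_
    have h := hQ.inv.posSemidef.conjTranspose_mul_mul_same A
    simpa [Matrix.conjTranspose_eq_transpose_of_trivial] using h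
  have hKd : IsUnit K.det := hKpd.det_pos.ne'.isUnit
  have hSS : S * S⁻¹ = 1 := Matrix.mul_nonsing_inv _ hSd
  have hQQ : Q * Q⁻¹ = 1 := Matrix.mul_nonsing_inv _ hQd
  have hMM' : M * M⁻¹ = 1 := Matrix.mul_nonsing_inv _ hMd
  have hMQ : A * S * Aᵀ = M - Q := by rw [hMdef]; abel
  -- symmetry of inverses
  have hQinvSym : Q⁻¹ᵀ = Q⁻¹ := by rw [Matrix.transpose_nonsing_inv, hQSymm.eq]
  have hSinvSym : S⁻¹ᵀ = S⁻¹ := by rw [Matrix.transpose_nonsing_inv, hSSymm.eq]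
  have hMSym : Mᵀ = M := by
    rw [hMdef]
    simp [Matrix.transpose_add, Matrix.transpose_mul, hQSymm.eq, hSSymm.eq, Matrix.mul_assoc]
  have hMinvSym : M⁻¹ᵀ = M⁻¹ := by rw [Matrix.transpose_nonsing_inv, hMSym]
  have hGT : Gᵀ = M⁻¹ * (A * S) := by
    rw [hGdef]
    simp [Matrix.transpose_mul, hMinvSym, hSSymm.eq, Matrix.mul_assoc]
  -- auxiliary products
  have w1 : A * (S * (Aᵀ * M⁻¹)) = 1 - Q * M⁻¹ := by
    have h : A * (S * (Aᵀ * M⁻¹)) = (A * S * Aᵀ) * M⁻¹ := by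
      simp [Matrix.mul_assoc]
    rw [h, hMQ, Matrix.sub_mul, hMM']
  have w2 : A * (S * (Aᵀ * (Q⁻¹ * A))) = M * (Q⁻¹ * A) - A := by
    have h : A * (S * (Aᵀ * (Q⁻¹ * A))) = (A * S * Aᵀ) * (Q⁻¹ * A) := by
      simp [Matrix.mul_assoc]
    rw [h, hMQ, Matrix.sub_mul, Matrix.mul_nonsing_inv_cancel_left _ _ hQd]
  have w3 : A * (S * (Aᵀ * Q⁻¹)) = M * Q⁻¹ - 1 := by
    have h : A * (S * (Aᵀ * Q⁻¹)) = (A * S * Aᵀ) * Q⁻¹ := by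
      simp [Matrix.mul_assoc]
    rw [h, hMQ, Matrix.sub_mul, hQQ]
  -- the four key matrix identities
  have h1 : K * G = Aᵀ * Q⁻¹ := by
    rw [hKdef, hGdef]
    simp only [Matrix.add_mul, Matrix.mul_assoc]
    rw [Matrix.nonsing_inv_mul_cancel_left _ _ hSd, w1, Matrix.mul_sub, Matrix.mul_sub,
      Matrix.mul_one, Matrix.nonsing_inv_mul_cancel_left _ _ hQd]
    abel
  have h2 : Gᵀ * K = Q⁻¹ * A := by
    rw [hGT, hKdef]
    simp only [Matrix.mul_add, Matrix.mul_assoc]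
    rw [hSS, Matrix.mul_one, w2, Matrix.mul_sub,
      Matrix.nonsing_inv_mul_cancel_left _ _ hMd]
    abel
  have h4 : Gᵀ * (K * G) = Q⁻¹ - M⁻¹ := by
    rw [h1, hGT]
    simp only [Matrix.mul_assoc]
    rw [w3, Matrix.mul_sub, Matrix.mul_one,
      Matrix.nonsing_inv_mul_cancel_left _ _ hMd]
  -- S₁ is the inverse of K
  have e_SK : S * K = 1 + S * (Aᵀ * (Q⁻¹ * A)) := by
    rw [hKdef, Matrix.mul_add, hSS]
    simp [Matrix.mul_assoc]
  have hGASK : G * A * S * K = S * (Aᵀ * (Q⁻¹ * A)) := by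
    rw [hGdef]
    simp only [Matrix.mul_assoc]
    rw [e_SK, Matrix.mul_add, Matrix.mul_one, Matrix.mul_add, w2, Matrix.mul_sub,
      Matrix.nonsing_inv_mul_cancel_left _ _ hMd,
      show M⁻¹ * A + (Q⁻¹ * A - M⁻¹ * A) = Q⁻¹ * A from by abel]
  have hS1K : (S - G * A * S) * K = 1 := by
    rw [Matrix.sub_mul, e_SK, hGASK]
    abel
  have hS1e : K⁻¹ = S - G * A * S := Matrix.inv_eq_left_inv hS1K
  have hS1pd : (S - G * A * S).PosDef := hS1e ▸ hKpd.inv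
  have hS1inv : (S - G * A * S)⁻¹ = K := by
    rw [← hS1e, Matrix.nonsing_inv_nonsing_inv _ hKd]
  -- determinants
  have hS1det : (S - G * A * S).det = K.det⁻¹ := by
    rw [← hS1e, Matrix.det_nonsing_inv, Ring.inverse_eq_inv']
  have hdetSK : S.det * K.det = M.det * Q.det⁻¹ := by
    have e1 : S * K = 1 + S * Aᵀ * Q⁻¹ * A := by
      rw [e_SK]; simp [Matrix.mul_assoc]
    have e2 : M * Q⁻¹ = 1 + A * (S * Aᵀ * Q⁻¹) := by
      rw [hMdef, Matrix.add_mul, hQQ, add_comm]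
      simp [Matrix.mul_assoc]
    calc S.det * K.det = (S * K).det := (Matrix.det_mul _ _).symm
    _ = (1 + (S * Aᵀ * Q⁻¹) * A).det := by rw [e1]
    _ = (1 + A * (S * Aᵀ * Q⁻¹)).det := Matrix.det_one_add_mul_comm _ _
    _ = (M * Q⁻¹).det := by rw [e2]
    _ = M.det * Q.det⁻¹ := by
        rw [Matrix.det_mul, Matrix.det_nonsing_inv, Ring.inverse_eq_inv']
  have hdetprod : Q.det * S.det = M.det * (S - G * A * S).det := by
    have hqne : Q.det ≠ 0 := hQ.det_pos.ne'
    have hkne : K.det ≠ 0 := hKpd.det_pos.ne'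
    have hdetM : Q.det * S.det * K.det = M.det := by
      field_simp at hdetSK
      linear_combination hdetSK
    rw [hS1det, ← hdetM, mul_inv_cancel_right₀ hkne]
  refine ⟨hM, hS1pd, fun x x' => ?_⟩
  have hdet : Q.det ^ (-(1:ℝ)/2) * S.det ^ (-(1:ℝ)/2)
      = M.det ^ (-(1:ℝ)/2) * (S - G * A * S).det ^ (-(1:ℝ)/2) := by
    rw [← Real.mul_rpow hQ.det_pos.le hS.det_pos.le,
      ← Real.mul_rpow hM.det_pos.le hS1pd.det_pos.le, hdetprod]
  exact gauss_mul_aux Q M S (S - G * A * S) K A G m₀ hS1inv hdet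
    (quad_key Q⁻¹ M⁻¹ S⁻¹ K A G h1 h2 hKdef h4) x x'
end

section
/- Let (Ω, 𝔉, P) be a probability space, α ∈ [0,1], and β : Ω → ℝ a Bernoulli random variable with parameter α. Let e, w : Ω → ℝⁿ and v, v₋ : Ω → ℝᵐ be square-integrable random vectors with E[e] = 0, E[w] = 0, E[v] = 0, E[v₋] = 0, second moments E[e eᵀ] = Σ, E[w wᵀ] = Q, E[v vᵀ] = R, E[v₋ v₋ᵀ] = R₋, cross moments E[e wᵀ] = Q, E[v v₋ᵀ] = 0, E[e vᵀ] = 0, E[e v₋ᵀ] = 0, E[w vᵀ] = 0, E[w v₋ᵀ] = 0, where Q is symmetric, and suppose β is independent of the tuple (e, w, v, v₋). Let C be an m×n matrix, θ an m×n matrix, x̂ ∈ ℝⁿ a fixed vector, and define x := x̂ + e and y := (1−β)(C x + v) + β(θ(x − w) + v₋). Then the covariance of y satisfies: E[(y − E y)(y − E y)ᵀ] = (1−α) C Σ Cᵀ + α θ Σ θᵀ + α R₋ + (1−α) R − α θ Q θᵀ + α(1−α)(θ − C) x̂ x̂ᵀ (θ − C)ᵀ. -/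
open MeasureTheory Matrix ProbabilityTheory

/-- Cross second-moment matrix `E[u zᵀ]` (entrywise integrals). -/
noncomputable def crossMoment {Ω : Type*} [MeasurableSpace Ω] (P : Measure Ω)
    {d₁ d₂ : ℕ} (u : Ω → (Fin d₁ → ℝ)) (z : Ω → (Fin d₂ → ℝ)) :
    Matrix (Fin d₁) (Fin d₂) ℝ :=
  Matrix.of fun i j => ∫ ω, u ω i * z ω j ∂P

open scoped ENNReal

/-!
Put `A = C e + v`, `B = θ (e - w) + v₋` and `c = (θ - C) x̂`. Then
`y - E y = (1 - β) (A - α c) + β (B + (1 - α) c)`, and since `β (1 - β) = 0` and `β` is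
independent of `(A, B)`, the covariance of `y` is
`(1 - α) (E[A Aᵀ] + α² c cᵀ) + α (E[B Bᵀ] + (1 - α)² c cᵀ)`,
where `(1 - α) α² + α (1 - α)² = α (1 - α)`. The cross moments give `E[A Aᵀ] = C Σ Cᵀ + R`
and, as `E[e wᵀ] = E[w wᵀ] = Q = Qᵀ`, `E[B Bᵀ] = θ (Σ - Q) θᵀ + R₋`.
-/

lemma mul_vecMulVec_mul_transpose {l k : Type*} [Fintype k] (M : Matrix l k ℝ) (x : k → ℝ) :
    M * vecMulVec x x * Mᵀ = vecMulVec (M *ᵥ x) (M *ᵥ x) := by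
  rw [mul_vecMulVec, vecMulVec_mul, vecMul_transpose]

noncomputable def covMatrix {Ω : Type*} [MeasurableSpace Ω] (P : Measure Ω) {d : ℕ}
    (u : Ω → Fin d → ℝ) : Matrix (Fin d) (Fin d) ℝ :=
  crossMoment P (fun ω => u ω - ∫ ω', u ω' ∂P) (fun ω => u ω - ∫ ω', u ω' ∂P)

section CrossMoment

variable {Ω : Type*} [MeasurableSpace Ω] {P : Measure Ω} {d₁ d₂ d₃ : ℕ}
  {u u' : Ω → Fin d₁ → ℝ} {z z' : Ω → Fin d₂ → ℝ}

lemma crossMoment_apply (u : Ω → Fin d₁ → ℝ) (z : Ω → Fin d₂ → ℝ) (i j) :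
    crossMoment P u z i j = ∫ ω, u ω i * z ω j ∂P := rfl

lemma MeasureTheory.MemLp.integrable_mul_apply (hu : MemLp u 2 P) (hz : MemLp z 2 P)
    (i : Fin d₁) (j : Fin d₂) :
    Integrable (fun ω => u ω i * z ω j) P :=
  (hu.eval i).integrable_mul (hz.eval j)

lemma MeasureTheory.MemLp.mulVec {p : ℝ≥0∞} (hu : MemLp u p P)
    (M : Matrix (Fin d₂) (Fin d₁) ℝ) :
    MemLp (fun ω => M *ᵥ u ω) p P :=
  (Matrix.mulVecLin M).toContinuousLinearMap.comp_memLp' hu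

lemma crossMoment_transpose (u : Ω → Fin d₁ → ℝ) (z : Ω → Fin d₂ → ℝ) :
    (crossMoment P u z)ᵀ = crossMoment P z u := by
  ext i j
  simp only [transpose_apply, crossMoment_apply, mul_comm]

lemma crossMoment_add_left (hu : MemLp u 2 P) (hu' : MemLp u' 2 P) (hz : MemLp z 2 P) :
    crossMoment P (fun ω => u ω + u' ω) z = crossMoment P u z + crossMoment P u' z := by
  ext i j
  simp only [crossMoment_apply, Matrix.add_apply, Pi.add_apply, add_mul]
  exact integral_add (hu.integrable_mul_apply hz i j) (hu'.integrable_mul_apply hz i j)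

lemma crossMoment_sub_left (hu : MemLp u 2 P) (hu' : MemLp u' 2 P) (hz : MemLp z 2 P) :
    crossMoment P (fun ω => u ω - u' ω) z = crossMoment P u z - crossMoment P u' z := by
  ext i j
  simp only [crossMoment_apply, Matrix.sub_apply, Pi.sub_apply, sub_mul]
  exact integral_sub (hu.integrable_mul_apply hz i j) (hu'.integrable_mul_apply hz i j)

lemma crossMoment_add_right (hu : MemLp u 2 P) (hz : MemLp z 2 P) (hz' : MemLp z' 2 P) :
    crossMoment P u (fun ω => z ω + z' ω) = crossMoment P u z + crossMoment P u z' := by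
  rw [← crossMoment_transpose, crossMoment_add_left hz hz' hu, transpose_add,
    crossMoment_transpose, crossMoment_transpose]

lemma crossMoment_sub_right (hu : MemLp u 2 P) (hz : MemLp z 2 P) (hz' : MemLp z' 2 P) :
    crossMoment P u (fun ω => z ω - z' ω) = crossMoment P u z - crossMoment P u z' := by
  rw [← crossMoment_transpose, crossMoment_sub_left hz hz' hu, transpose_sub,
    crossMoment_transpose, crossMoment_transpose]

lemma crossMoment_mulVec_left (hu : MemLp u 2 P) (hz : MemLp z 2 P)
    (M : Matrix (Fin d₃) (Fin d₁) ℝ) :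
    crossMoment P (fun ω => M *ᵥ u ω) z = M * crossMoment P u z := by
  ext i j
  simp only [crossMoment_apply, mul_apply, mulVec, dotProduct, Finset.sum_mul, mul_assoc]
  rw [integral_finsetSum _ fun k _ => (hu.integrable_mul_apply hz k j).const_mul _]
  simp only [integral_const_mul]

lemma crossMoment_mulVec_right (hu : MemLp u 2 P) (hz : MemLp z 2 P)
    (M : Matrix (Fin d₃) (Fin d₂) ℝ) :
    crossMoment P u (fun ω => M *ᵥ z ω) = crossMoment P u z * Mᵀ := by
  rw [← crossMoment_transpose, crossMoment_mulVec_left hz hu, transpose_mul,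
    crossMoment_transpose]

lemma crossMoment_add_self (hu : MemLp u 2 P) (hu' : MemLp u' 2 P) :
    crossMoment P (fun ω => u ω + u' ω) (fun ω => u ω + u' ω)
      = crossMoment P u u + crossMoment P u u' + (crossMoment P u u')ᵀ + crossMoment P u' u' := by
  rw [crossMoment_add_left hu hu' (z := fun ω => u ω + u' ω) (hu.add hu'),
    crossMoment_add_right hu hu hu', crossMoment_add_right hu' hu hu', crossMoment_transpose]
  abel

lemma crossMoment_sub_self (hu : MemLp u 2 P) (hu' : MemLp u' 2 P) :
    crossMoment P (fun ω => u ω - u' ω) (fun ω => u ω - u' ω)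
      = crossMoment P u u - crossMoment P u u' - (crossMoment P u u')ᵀ + crossMoment P u' u' := by
  rw [crossMoment_sub_left hu hu' (z := fun ω => u ω - u' ω) (hu.sub hu'),
    crossMoment_sub_right hu hu hu', crossMoment_sub_right hu' hu hu', crossMoment_transpose]
  abel

lemma crossMoment_mulVec_self (hu : MemLp u 2 P) (M : Matrix (Fin d₂) (Fin d₁) ℝ) :
    crossMoment P (fun ω => M *ᵥ u ω) (fun ω => M *ᵥ u ω) = M * crossMoment P u u * Mᵀ := by
  rw [crossMoment_mulVec_left hu (hu.mulVec M), crossMoment_mulVec_right hu hu, Matrix.mul_assoc]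

lemma integral_apply_eq_zero (hu : Integrable u P) (hu0 : ∫ ω, u ω ∂P = 0) (i : Fin d₁) :
    ∫ ω, u ω i ∂P = 0 := by
  rw [← eval_integral hu.eval, hu0, Pi.zero_apply]

lemma crossMoment_add_const_self [IsProbabilityMeasure P] (hu : MemLp u 2 P)
    (hu0 : ∫ ω, u ω ∂P = 0) (a : Fin d₁ → ℝ) :
    crossMoment P (fun ω => u ω + a) (fun ω => u ω + a) = crossMoment P u u + vecMulVec a a := by
  have hint := hu.integrable one_le_two
  ext i j
  have hexp : ∀ ω, (u ω + a) i * (u ω + a) j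
      = u ω i * u ω j + a i * u ω j + a j * u ω i + a i * a j := fun ω => by
    simp only [Pi.add_apply]; ring
  have huu := hu.integrable_mul_apply hu i j
  have hui := hint.eval i
  have huj := hint.eval j
  simp only [crossMoment_apply, hexp, Matrix.add_apply, vecMulVec_apply]
  rw [integral_add (by fun_prop) (by fun_prop), integral_add (by fun_prop) (by fun_prop),
    integral_add huu (by fun_prop), integral_const_mul, integral_const_mul,
    integral_apply_eq_zero hint hu0, integral_apply_eq_zero hint hu0]
  simp

lemma crossMoment_mulVec_add_self (hu : MemLp u 2 P) (hz : MemLp z 2 P)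
    (huz : crossMoment P u z = 0) (M : Matrix (Fin d₂) (Fin d₁) ℝ) :
    crossMoment P (fun ω => M *ᵥ u ω + z ω) (fun ω => M *ᵥ u ω + z ω)
      = M * crossMoment P u u * Mᵀ + crossMoment P z z := by
  rw [crossMoment_add_self (hu.mulVec M) hz, crossMoment_mulVec_self hu,
    crossMoment_mulVec_left hu hz, huz]
  simp

lemma integral_mulVec_add (hu : Integrable u P) (hz : Integrable z P)
    (M : Matrix (Fin d₂) (Fin d₁) ℝ) :
    ∫ ω, M *ᵥ u ω + z ω ∂P = M *ᵥ (∫ ω, u ω ∂P) + ∫ ω, z ω ∂P := by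
  have hMu : Integrable (fun ω => M *ᵥ u ω) P :=
    memLp_one_iff_integrable.1 ((memLp_one_iff_integrable.2 hu).mulVec M)
  rw [integral_add hMu hz]
  congr 1
  exact (Matrix.mulVecLin M).toContinuousLinearMap.integral_comp_comm hu

end CrossMoment

section BernoulliMixture

variable {Ω : Type*} [MeasurableSpace Ω] {P : Measure Ω} {β : Ω → ℝ} {α : ℝ}

lemma integral_eq_measureReal_of_eq_zero_or_one (hβm : Measurable β)
    (hβ : ∀ ω, β ω = 0 ∨ β ω = 1) : ∫ ω, β ω ∂P = P.real {ω | β ω = 1} := by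
  have hβ_ind : β = Set.indicator {ω | β ω = 1} 1 := by
    funext ω
    rcases hβ ω with h | h <;> simp [h]
  have hmeas : MeasurableSet {ω | β ω = 1} := hβm (measurableSet_singleton 1)
  conv_lhs => rw [hβ_ind]
  exact integral_indicator_one hmeas

lemma memLp_top_of_eq_zero_or_one (hβm : Measurable β) (hβ : ∀ ω, β ω = 0 ∨ β ω = 1) :
    MemLp β ⊤ P :=
  memLp_top_of_bound hβm.aestronglyMeasurable 1 <| ae_of_all _ fun ω => by
    rcases hβ ω with h | h <;> simp [h]

variable [IsProbabilityMeasure P]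

lemma integral_one_sub (hβ : Integrable β P) (hα : ∫ ω, β ω ∂P = α) :
    ∫ ω, (1 - β ω) ∂P = 1 - α := by
  rw [integral_sub (integrable_const 1) hβ, hα, integral_const, probReal_univ, one_smul]

lemma integral_one_sub_smul_add_smul {E : Type*} [NormedAddCommGroup E] [NormedSpace ℝ E]
    [CompleteSpace E] [MeasurableSpace E] [BorelSpace E] {U V : Ω → E}
    (hβ : MemLp β ⊤ P) (hα : ∫ ω, β ω ∂P = α) (hU : Integrable U P) (hV : Integrable V P)
    (hβU : IndepFun β U P) (hβV : IndepFun β V P) :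
    ∫ ω, (1 - β ω) • U ω + β ω • V ω ∂P = (1 - α) • ∫ ω, U ω ∂P + α • ∫ ω, V ω ∂P := by
  have hβ' : MemLp (fun ω => 1 - β ω) ⊤ P := (memLp_const 1).sub hβ
  have hβU' : IndepFun (fun ω => 1 - β ω) U P :=
    hβU.comp (measurable_const.sub measurable_id) measurable_id
  have hβU_int : Integrable (fun ω => (1 - β ω) • U ω) P := hU.smul_of_top_right hβ'
  have hβV_int : Integrable (fun ω => β ω • V ω) P := hV.smul_of_top_right hβ
  rw [integral_add hβU_int hβV_int,
    hβU'.integral_fun_smul_eq_smul_integral hβ'.aestronglyMeasurable hU.aestronglyMeasurable,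
    hβV.integral_fun_smul_eq_smul_integral hβ.aestronglyMeasurable hV.aestronglyMeasurable,
    integral_one_sub (hβ.integrable le_top) hα, hα]

lemma crossMoment_one_sub_smul_add_smul {d : ℕ} {U V : Ω → Fin d → ℝ} (hβm : Measurable β)
    (hβ : ∀ ω, β ω = 0 ∨ β ω = 1) (hα : ∫ ω, β ω ∂P = α) (hU : MemLp U 2 P) (hV : MemLp V 2 P)
    (hβU : IndepFun β U P) (hβV : IndepFun β V P) :
    crossMoment P (fun ω => (1 - β ω) • U ω + β ω • V ω)
        (fun ω => (1 - β ω) • U ω + β ω • V ω)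
      = (1 - α) • crossMoment P U U + α • crossMoment P V V := by
  ext i j
  have hβ_top : MemLp β ⊤ P := memLp_top_of_eq_zero_or_one hβm hβ
  have hexp : ∀ ω, ((1 - β ω) • U ω + β ω • V ω) i * ((1 - β ω) • U ω + β ω • V ω) j
      = (1 - β ω) * (U ω i * U ω j) + β ω * (V ω i * V ω j) := fun ω => by
    rcases hβ ω with h | h <;> simp [h]
  have hUU := hU.integrable_mul_apply hU i j
  have hVV := hV.integrable_mul_apply hV i j
  simp only [crossMoment_apply, hexp, Matrix.add_apply, Matrix.smul_apply, smul_eq_mul]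
  have hβUU : Integrable (fun ω => (1 - β ω) * (U ω i * U ω j)) P :=
    hUU.smul_of_top_right ((memLp_const 1).sub hβ_top)
  have hβVV : Integrable (fun ω => β ω * (V ω i * V ω j)) P := hVV.smul_of_top_right hβ_top
  rw [integral_add hβUU hβVV,
    hβU.integral_fun_comp_mul_comp (f := fun b => 1 - b) (g := fun u => u i * u j)
      hβm.aemeasurable hU.aemeasurable (by fun_prop) (by fun_prop),
    hβV.integral_fun_comp_mul_comp (f := fun b => b) (g := fun u => u i * u j)
      hβm.aemeasurable hV.aemeasurable (by fun_prop) (by fun_prop)]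
  simp only [integral_one_sub (hβ_top.integrable le_top) hα, hα]

lemma covMatrix_one_sub_smul_add_smul {d : ℕ} {U V : Ω → Fin d → ℝ} (hβm : Measurable β)
    (hβ : ∀ ω, β ω = 0 ∨ β ω = 1) (hα : ∫ ω, β ω ∂P = α) (hU : MemLp U 2 P) (hV : MemLp V 2 P)
    (hU0 : ∫ ω, U ω ∂P = 0) (hV0 : ∫ ω, V ω ∂P = 0) (hβU : IndepFun β U P)
    (hβV : IndepFun β V P) (a b : Fin d → ℝ) :
    covMatrix P (fun ω => (1 - β ω) • (a + U ω) + β ω • (b + V ω))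
      = (1 - α) • crossMoment P U U + α • crossMoment P V V
        + (α * (1 - α)) • vecMulVec (b - a) (b - a) := by
  have hUint := hU.integrable one_le_two
  have hVint := hV.integrable one_le_two
  have hmean : ∫ ω, (1 - β ω) • (a + U ω) + β ω • (b + V ω) ∂P = (1 - α) • a + α • b := by
    rw [integral_one_sub_smul_add_smul (U := fun ω => a + U ω) (V := fun ω => b + V ω)
      (memLp_top_of_eq_zero_or_one hβm hβ) hα ((integrable_const a).add hUint)
      ((integrable_const b).add hVint) (hβU.comp measurable_id (measurable_const_add a))
      (hβV.comp measurable_id (measurable_const_add b)),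
      integral_add (integrable_const a) hUint, integral_add (integrable_const b) hVint, hU0, hV0]
    simp
  have hcentered : (fun ω => (1 - β ω) • (a + U ω) + β ω • (b + V ω)
        - ∫ ω', (1 - β ω') • (a + U ω') + β ω' • (b + V ω') ∂P)
      = fun ω => (1 - β ω) • (U ω + (-α) • (b - a)) + β ω • (V ω + (1 - α) • (b - a)) := by
    rw [hmean]
    funext ω
    module
  rw [covMatrix, hcentered,
    crossMoment_one_sub_smul_add_smul (U := fun ω => U ω + (-α) • (b - a))
      (V := fun ω => V ω + (1 - α) • (b - a)) hβm hβ hα (hU.add (memLp_const _))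
      (hV.add (memLp_const _)) (hβU.comp measurable_id (measurable_add_const _))
      (hβV.comp measurable_id (measurable_add_const _)),
    crossMoment_add_const_self hU hU0, crossMoment_add_const_self hV hV0]
  simp only [smul_vecMulVec, vecMulVec_smul]
  module

end BernoulliMixture

theorem delayed_measurement_covariance_general (n m : ℕ)
    {Ω : Type*} [MeasurableSpace Ω] (P : Measure Ω) [IsProbabilityMeasure P]
    (α : ℝ) (hα0 : 0 ≤ α)
    (β : Ω → ℝ) (hβmeas : Measurable β)
    (hβ01 : ∀ ω, β ω = 0 ∨ β ω = 1)
    (hβα : P {ω | β ω = 1} = ENNReal.ofReal α)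
    (e w : Ω → (Fin n → ℝ)) (v vm : Ω → (Fin m → ℝ))
    (he2 : MemLp e 2 P) (hw2 : MemLp w 2 P)
    (hv2 : MemLp v 2 P) (hvm2 : MemLp vm 2 P)
    (hezero : (∫ ω, e ω ∂P) = 0) (hwzero : (∫ ω, w ω ∂P) = 0)
    (hvzero : (∫ ω, v ω ∂P) = 0) (hvmzero : (∫ ω, vm ω ∂P) = 0)
    (Sig Q : Matrix (Fin n) (Fin n) ℝ) (R Rm : Matrix (Fin m) (Fin m) ℝ)
    (hee : crossMoment P e e = Sig) (hww : crossMoment P w w = Q)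
    (hvv : crossMoment P v v = R) (hvmvm : crossMoment P vm vm = Rm)
    (hew : crossMoment P e w = Q)
    (hev : crossMoment P e v = 0) (hevm : crossMoment P e vm = 0)
    (hwvm : crossMoment P w vm = 0)
    (hQSymm : Q.IsSymm)
    (hindep : IndepFun β (fun ω => (e ω, w ω, v ω, vm ω)) P)
    (C θ : Matrix (Fin m) (Fin n) ℝ) (xhat : Fin n → ℝ)
    (x : Ω → (Fin n → ℝ)) (hx : x = fun ω => xhat + e ω)
    (y : Ω → (Fin m → ℝ))
    (hy : y = fun ω => (1 - β ω) • (C.mulVec (x ω) + v ω)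
                      + β ω • (θ.mulVec (x ω - w ω) + vm ω)) :
    crossMoment P (fun ω => y ω - ∫ ω', y ω' ∂P) (fun ω => y ω - ∫ ω', y ω' ∂P) =
      (1 - α) • (C * Sig * Cᵀ) + α • (θ * Sig * θᵀ) + α • Rm + (1 - α) • R
        - α • (θ * Q * θᵀ)
        + (α * (1 - α)) • ((θ - C) * Matrix.vecMulVec xhat xhat * (θ - C)ᵀ) := by
  set A := fun ω => C *ᵥ e ω + v ω
  set B := fun ω => θ *ᵥ (e ω - w ω) + vm ω
  have hew2 : MemLp (fun ω => e ω - w ω) 2 P := he2.sub hw2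
  have hA0 : ∫ ω, A ω ∂P = 0 := by
    rw [integral_mulVec_add (he2.integrable one_le_two) (hv2.integrable one_le_two), hezero,
      hvzero, mulVec_zero, add_zero]
  have hB0 : ∫ ω, B ω ∂P = 0 := by
    rw [integral_mulVec_add (hew2.integrable one_le_two) (hvm2.integrable one_le_two),
      integral_sub (he2.integrable one_le_two) (hw2.integrable one_le_two),
      hezero, hwzero, hvmzero, sub_zero, mulVec_zero, add_zero]
  have hAA : crossMoment P A A = C * Sig * Cᵀ + R := by
    rw [crossMoment_mulVec_add_self he2 hv2 hev, hee, hvv]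
  have hBB : crossMoment P B B = θ * Sig * θᵀ - θ * Q * θᵀ + Rm := by
    rw [crossMoment_mulVec_add_self hew2 hvm2
        (by rw [crossMoment_sub_left he2 hw2 hvm2, hevm, hwvm, sub_zero]),
      crossMoment_sub_self he2 hw2, hee, hew, hww, hvmvm, hQSymm.eq]
    simp [Matrix.mul_sub, Matrix.sub_mul]
  have hβα' : ∫ ω, β ω ∂P = α := by
    rw [integral_eq_measureReal_of_eq_zero_or_one hβmeas hβ01, measureReal_def, hβα,
      ENNReal.toReal_ofReal hα0]
  have hβA : IndepFun β A P := hindep.comp measurable_id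
    (by fun_prop : Measurable fun p : _ × _ × (Fin m → ℝ) × _ => C *ᵥ p.1 + p.2.2.1)
  have hβB : IndepFun β B P := hindep.comp measurable_id
    (by fun_prop : Measurable fun p : (Fin n → ℝ) × _ × _ × (Fin m → ℝ) =>
      θ *ᵥ (p.1 - p.2.1) + p.2.2.2)
  have hy_mix : y = fun ω => (1 - β ω) • (C *ᵥ xhat + A ω) + β ω • (θ *ᵥ xhat + B ω) := by
    rw [hy, hx]
    funext ω
    simp only [A, B, mulVec_add, mulVec_sub]
    module
  change covMatrix P y = _
  rw [hy_mix, covMatrix_one_sub_smul_add_smul (U := A) (V := B) hβmeas hβ01 hβα'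
      ((he2.mulVec C).add hv2) ((hew2.mulVec θ).add hvm2) hA0 hB0 hβA hβB, hAA, hBB, ← sub_mulVec,
    mul_vecMulVec_mul_transpose]
  module

/-- Covariance of the randomly one-step-delayed measurement. -/
theorem delayed_measurement_covariance (n m : ℕ)
    {Ω : Type*} [MeasurableSpace Ω] (P : Measure Ω) [IsProbabilityMeasure P]
    (α : ℝ) (hα0 : 0 ≤ α) (hα1 : α ≤ 1)
    (β : Ω → ℝ) (hβmeas : Measurable β)
    (hβ01 : ∀ ω, β ω = 0 ∨ β ω = 1)
    (hβα : P {ω | β ω = 1} = ENNReal.ofReal α)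
    (e w : Ω → (Fin n → ℝ)) (v vm : Ω → (Fin m → ℝ))
    (hemeas : Measurable e) (hwmeas : Measurable w)
    (hvmeas : Measurable v) (hvmmeas : Measurable vm)
    (he2 : MemLp e 2 P) (hw2 : MemLp w 2 P)
    (hv2 : MemLp v 2 P) (hvm2 : MemLp vm 2 P)
    (hezero : (∫ ω, e ω ∂P) = 0) (hwzero : (∫ ω, w ω ∂P) = 0)
    (hvzero : (∫ ω, v ω ∂P) = 0) (hvmzero : (∫ ω, vm ω ∂P) = 0)
    (Sig Q : Matrix (Fin n) (Fin n) ℝ) (R Rm : Matrix (Fin m) (Fin m) ℝ)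
    (hee : crossMoment P e e = Sig) (hww : crossMoment P w w = Q)
    (hvv : crossMoment P v v = R) (hvmvm : crossMoment P vm vm = Rm)
    (hew : crossMoment P e w = Q) (hvvm : crossMoment P v vm = 0)
    (hev : crossMoment P e v = 0) (hevm : crossMoment P e vm = 0)
    (hwv : crossMoment P w v = 0) (hwvm : crossMoment P w vm = 0)
    (hQSymm : Q.IsSymm)
    (hindep : IndepFun β (fun ω => (e ω, w ω, v ω, vm ω)) P)
    (C θ : Matrix (Fin m) (Fin n) ℝ) (xhat : Fin n → ℝ)
    (x : Ω → (Fin n → ℝ)) (hx : x = fun ω => xhat + e ω)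
    (y : Ω → (Fin m → ℝ))
    (hy : y = fun ω => (1 - β ω) • (C.mulVec (x ω) + v ω)
                      + β ω • (θ.mulVec (x ω - w ω) + vm ω)) :
    crossMoment P (fun ω => y ω - ∫ ω', y ω' ∂P) (fun ω => y ω - ∫ ω', y ω' ∂P) =
      (1 - α) • (C * Sig * Cᵀ) + α • (θ * Sig * θᵀ) + α • Rm + (1 - α) • R
        - α • (θ * Q * θᵀ)
        + (α * (1 - α)) • ((θ - C) * Matrix.vecMulVec xhat xhat * (θ - C)ᵀ) :=
  delayed_measurement_covariance_general n m P α hα0 β hβmeas hβ01 hβα e w v vm he2 hw2 hv2 hvm2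
    hezero hwzero hvzero hvmzero Sig Q R Rm hee hww hvv hvmvm hew hev hevm hwvm hQSymm hindep C θ
    xhat x hx y hy
end

section
/- Let P and B be n×n real symmetric positive semidefinite matrices and N an n×n real matrix with ‖N‖ < 1, where ‖·‖ is the operator norm induced by the Euclidean norm. If xᵀ P x ≤ xᵀ (N P Nᵀ + B) x for all x ∈ ℝⁿ (i.e., P ⪯ N P Nᵀ + B in the Loewner order), then ‖P‖ ≤ ‖B‖ / (1 − ‖N‖²). -/
/-! Pairing the Loewner inequality with `x` and moving `N` across the inner product gives
`⟪P x, x⟫ ≤ ⟪P Nᵀx, Nᵀx⟫ + ⟪B x, x⟫ ≤ (‖N‖² ‖P‖ + ‖B‖) ‖x‖²`. For a positive operator the norm is the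
supremum of the Rayleigh quotient, so `‖P‖ ≤ ‖N‖² ‖P‖ + ‖B‖`, which rearranges to the bound since
`‖N‖ < 1`. -/

open Matrix

/-- The operator norm of a matrix induced by the Euclidean norm on `ℝⁿ`. -/
noncomputable def matrixOpNorm {n : ℕ} (M : Matrix (Fin n) (Fin n) ℝ) : ℝ :=
  ‖LinearMap.toContinuousLinearMap (Matrix.toEuclideanLin M)‖

namespace ContinuousLinearMap

open RCLike InnerProduct

variable {𝕜 E : Type*} [RCLike 𝕜] [NormedAddCommGroup E] [InnerProductSpace 𝕜 E]

theorem reApplyInnerSelf_le_norm_mul_sq (T : E →L[𝕜] E) (x : E) :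
    T.reApplyInnerSelf x ≤ ‖T‖ * ‖x‖ ^ 2 :=
  calc T.reApplyInnerSelf x ≤ ‖inner 𝕜 (T x) x‖ := re_le_norm _
    _ ≤ ‖T x‖ * ‖x‖ := norm_inner_le_norm _ _
    _ ≤ ‖T‖ * ‖x‖ * ‖x‖ := by gcongr; exact T.le_opNorm x
    _ = ‖T‖ * ‖x‖ ^ 2 := by ring

theorem IsPositive.norm_le_of_reApplyInnerSelf_le {T : E →L[𝕜] E} (hT : T.IsPositive) {c : ℝ}
    (hc : 0 ≤ c) (h : ∀ x, T.reApplyInnerSelf x ≤ c * ‖x‖ ^ 2) : ‖T‖ ≤ c := by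
  rw [T.norm_eq_iSup_rayleighQuotient hT.isSymmetric]
  refine ciSup_le fun x => ?_
  have hx : 0 ≤ T.rayleighQuotient x := div_nonneg (hT.re_inner_nonneg_left x) (sq_nonneg ‖x‖)
  rw [abs_of_nonneg hx]
  exact div_le_of_le_mul₀ (by positivity) hc (h x)

variable [CompleteSpace E]

theorem reApplyInnerSelf_mul_mul_adjoint (T N : E →L[𝕜] E) (x : E) :
    (N * T * N†).reApplyInnerSelf x = T.reApplyInnerSelf ((N†) x) :=
  congrArg re (adjoint_inner_right N (T ((N†) x)) x).symm

theorem IsPositive.norm_le_norm_sq_mul_add_norm {T N B : E →L[𝕜] E} (hT : T.IsPositive)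
    (h : ∀ x, T.reApplyInnerSelf x ≤ (N * T * N† + B).reApplyInnerSelf x) :
    ‖T‖ ≤ ‖N‖ ^ 2 * ‖T‖ + ‖B‖ := by
  refine hT.norm_le_of_reApplyInnerSelf_le (by positivity) fun x => ?_
  have hN : ‖(N†) x‖ ≤ ‖N‖ * ‖x‖ := by
    simpa only [LinearIsometryEquiv.norm_map] using (N†).le_opNorm x
  calc T.reApplyInnerSelf x ≤ (N * T * N†).reApplyInnerSelf x + B.reApplyInnerSelf x := by
        simpa only [reApplyInnerSelf_apply, _root_.add_apply, inner_add_left,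
          map_add] using h x
    _ = T.reApplyInnerSelf ((N†) x) + B.reApplyInnerSelf x := by
        rw [reApplyInnerSelf_mul_mul_adjoint]
    _ ≤ ‖T‖ * ‖(N†) x‖ ^ 2 + ‖B‖ * ‖x‖ ^ 2 := add_le_add (T.reApplyInnerSelf_le_norm_mul_sq _)
        (B.reApplyInnerSelf_le_norm_mul_sq _)
    _ ≤ ‖T‖ * (‖N‖ * ‖x‖) ^ 2 + ‖B‖ * ‖x‖ ^ 2 := by gcongr
    _ = (‖N‖ ^ 2 * ‖T‖ + ‖B‖) * ‖x‖ ^ 2 := by ring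

theorem IsPositive.norm_le_div_one_sub_norm_sq {T N B : E →L[𝕜] E} (hT : T.IsPositive)
    (hN : ‖N‖ < 1) (h : ∀ x, T.reApplyInnerSelf x ≤ (N * T * N† + B).reApplyInnerSelf x) :
    ‖T‖ ≤ ‖B‖ / (1 - ‖N‖ ^ 2) := by
  have hN2 : ‖N‖ ^ 2 < 1 := pow_lt_one₀ (norm_nonneg N) hN two_ne_zero
  rw [le_div_iff₀ (sub_pos.mpr hN2)]
  linarith [hT.norm_le_norm_sq_mul_add_norm h]

end ContinuousLinearMap

namespace Matrix

open InnerProduct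

variable {n : Type*} [Fintype n] [DecidableEq n]

theorem reApplyInnerSelf_toEuclideanCLM (A : Matrix n n ℝ) (x : EuclideanSpace ℝ n) :
    (toEuclideanCLM (𝕜 := ℝ) A).reApplyInnerSelf x = x.ofLp ⬝ᵥ A *ᵥ x.ofLp := by
  rw [ContinuousLinearMap.reApplyInnerSelf_apply, real_inner_comm, inner_toEuclideanCLM]
  rfl

theorem PosSemidef.isPositive_toEuclideanCLM {A : Matrix n n ℝ} (hA : A.PosSemidef) :
    (toEuclideanCLM (𝕜 := ℝ) A).IsPositive := by
  rwa [← ContinuousLinearMap.isPositive_toLinearMap_iff, coe_toEuclideanCLM_eq_toEuclideanLin,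
    isPositive_toEuclideanLin_iff]

theorem toEuclideanCLM_mul_mul_transpose (N A : Matrix n n ℝ) :
    toEuclideanCLM (𝕜 := ℝ) (N * A * Nᵀ)
      = toEuclideanCLM (𝕜 := ℝ) N * toEuclideanCLM (𝕜 := ℝ) A * (toEuclideanCLM (𝕜 := ℝ) N)† := by
  rw [← conjTranspose_eq_transpose_of_trivial, ← star_eq_conjTranspose, map_mul, map_mul,
    map_star, ContinuousLinearMap.star_eq_adjoint]

end Matrix

theorem matrixOpNorm_eq_norm_toEuclideanCLM {n : ℕ} (M : Matrix (Fin n) (Fin n) ℝ) :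
    matrixOpNorm M = ‖toEuclideanCLM (𝕜 := ℝ) M‖ :=
  rfl

theorem covariance_norm_bound_general (n : ℕ)
    (P B N : Matrix (Fin n) (Fin n) ℝ)
    (hP : P.PosSemidef)
    (hN : matrixOpNorm N < 1)
    (hle : ∀ x : Fin n → ℝ, x ⬝ᵥ P.mulVec x ≤ x ⬝ᵥ (N * P * Nᵀ + B).mulVec x) :
    matrixOpNorm P ≤ matrixOpNorm B / (1 - matrixOpNorm N ^ 2) := by
  simp only [matrixOpNorm_eq_norm_toEuclideanCLM] at hN ⊢
  refine hP.isPositive_toEuclideanCLM.norm_le_div_one_sub_norm_sq hN fun x => ?_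
  rw [← toEuclideanCLM_mul_mul_transpose, ← map_add, reApplyInnerSelf_toEuclideanCLM,
    reApplyInnerSelf_toEuclideanCLM]
  exact hle x.ofLp

/-- Bound on a symmetric positive semidefinite matrix satisfying
a Loewner-order fixed-point inequality with a contraction. -/
theorem covariance_norm_bound (n : ℕ)
    (P B N : Matrix (Fin n) (Fin n) ℝ)
    (hP : P.PosSemidef) (hB : B.PosSemidef)
    (hN : matrixOpNorm N < 1)
    (hle : ∀ x : Fin n → ℝ, x ⬝ᵥ P.mulVec x ≤ x ⬝ᵥ (N * P * Nᵀ + B).mulVec x) :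
    matrixOpNorm P ≤ matrixOpNorm B / (1 - matrixOpNorm N ^ 2) :=
  covariance_norm_bound_general n P B N hP hN hle
end

section
/- Let (Ω, 𝔉, P) be a probability space, α ∈ [0,1], and β : Ω → ℝ a Bernoulli random variable with parameter α. Let x, x₋ : Ω → ℝⁿ and v, v₋ : Ω → ℝᵐ be integrable random vectors with E[v] = 0 and E[v₋] = 0, and suppose β is independent of the tuple (x, x₋, v, v₋). Let C, C₋ be m×n matrices, K an n×m matrix, and x̂_pred, x̂_prev ∈ ℝⁿ fixed vectors with E[x] = x̂_pred and E[x₋] = x̂_prev. Define y := (1−β)(C x + v) + β(C₋ x₋ + v₋) and the posterior estimate x̂_post := x̂_pred + K(y − (1−α)C x̂_pred − α C₋ x̂_prev). Then the posterior estimation error is unbiased: E[x − x̂_post] = 0. -/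
open MeasureTheory Matrix ProbabilityTheory

/-! Since `β` is independent of the signals `C x + v` and `C₋ x₋ + v₋`, the mean of the delayed
measurement is `(1 - α) C x̂_pred + α C₋ x̂_prev`, which is exactly the offset subtracted in the
innovation. The innovation therefore has zero mean, and so has `x - x̂_post`. -/

theorem Set.eq_indicator_one_of_forall_eq_zero_or_eq_one {Ω M : Type*} [Zero M] [One M]
    {f : Ω → M} (hf : ∀ ω, f ω = 0 ∨ f ω = 1) : f = {ω | f ω = 1}.indicator 1 := by
  ext ω
  by_cases h1 : f ω = 1
  · simp [h1]
  · rw [(hf ω).resolve_right h1, Set.indicator_of_notMem (s := {ω | f ω = 1}) h1]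

section ZeroOneValued

variable {Ω : Type*} [MeasurableSpace Ω] {μ : Measure Ω} {β : Ω → ℝ}

theorem integrable_of_forall_eq_zero_or_eq_one [IsFiniteMeasure μ] (hβ : Measurable β)
    (h01 : ∀ ω, β ω = 0 ∨ β ω = 1) : Integrable β μ := by
  rw [Set.eq_indicator_one_of_forall_eq_zero_or_eq_one h01]
  exact (integrable_const 1).indicator (hβ (measurableSet_singleton 1))

theorem integral_eq_measureReal_of_forall_eq_zero_or_eq_one (hβ : Measurable β)
    (h01 : ∀ ω, β ω = 0 ∨ β ω = 1) : ∫ ω, β ω ∂μ = μ.real {ω | β ω = 1} := by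
  have hβ_ind := Set.eq_indicator_one_of_forall_eq_zero_or_eq_one h01
  rw [integral_congr_ae (.of_forall (congrFun hβ_ind)),
    integral_indicator_one (s := {ω | β ω = 1}) (hβ (measurableSet_singleton 1))]

end ZeroOneValued

section MulVec

variable {Ω ι κ 𝕜 : Type*} [MeasurableSpace Ω] {μ : Measure Ω} [Fintype ι] [Fintype κ]
  [RCLike 𝕜] {f : Ω → ι → 𝕜}

theorem MeasureTheory.Integrable.matrix_mulVec (A : Matrix κ ι 𝕜) (hf : Integrable f μ) :
    Integrable (fun ω => A *ᵥ f ω) μ :=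
  A.mulVecLin.toContinuousLinearMap.integrable_comp hf

theorem integral_matrix_mulVec (A : Matrix κ ι 𝕜) (hf : Integrable f μ) :
    ∫ ω, A *ᵥ f ω ∂μ = A *ᵥ ∫ ω, f ω ∂μ :=
  A.mulVecLin.toContinuousLinearMap.integral_comp_comm hf

theorem integral_sub_add_mulVec_sub_integral [IsProbabilityMeasure μ] {g : Ω → κ → 𝕜}
    (K : Matrix ι κ 𝕜) (hf : Integrable f μ) (hg : Integrable g μ) :
    ∫ ω, f ω - (μ[f] + K *ᵥ (g ω - μ[g])) ∂μ = 0 := by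
  have hinnov : Integrable (fun ω => g ω - μ[g]) μ := hg.sub' (integrable_const _)
  rw [integral_sub hf ((integrable_const _).fun_add (hinnov.matrix_mulVec K)),
    integral_add (integrable_const _) (hinnov.matrix_mulVec K), integral_matrix_mulVec K hinnov,
    integral_sub hg (integrable_const _)]
  simp

end MulVec

section Mixture

variable {Ω E : Type*} [MeasurableSpace Ω] {μ : Measure Ω} [IsProbabilityMeasure μ]
  [NormedAddCommGroup E] [NormedSpace ℝ E] [MeasurableSpace E] [BorelSpace E]
  {β : Ω → ℝ} {a b : Ω → E}

theorem integrable_one_sub_smul_add_smul_of_indepFun (hβ : Integrable β μ) (ha : Integrable a μ)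
    (hb : Integrable b μ) (hβa : IndepFun β a μ) (hβb : IndepFun β b μ) :
    Integrable (fun ω => (1 - β ω) • a ω + β ω • b ω) μ :=
  ((hβa.comp (measurable_const.sub measurable_id) measurable_id).integrable_smul
    ((integrable_const 1).sub hβ) ha).add (hβb.integrable_smul hβ hb)

theorem integral_one_sub_smul_add_smul_of_indepFun (hβ : Integrable β μ) (ha : Integrable a μ)
    (hb : Integrable b μ) (hβa : IndepFun β a μ) (hβb : IndepFun β b μ) :
    ∫ ω, (1 - β ω) • a ω + β ω • b ω ∂μ = (1 - μ[β]) • μ[a] + μ[β] • μ[b] := by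
  have hβa' : IndepFun (fun ω => 1 - β ω) a μ :=
    hβa.comp (measurable_const.sub measurable_id) measurable_id
  have h1β : Integrable (fun ω => 1 - β ω) μ := (integrable_const 1).sub hβ
  rw [integral_add (hβa'.integrable_smul h1β ha) (hβb.integrable_smul hβ hb),
    hβa'.integral_fun_smul_eq_smul_integral h1β.1 ha.1,
    hβb.integral_fun_smul_eq_smul_integral hβ.1 hb.1, integral_sub (integrable_const 1) hβ]
  simp

end Mixture

theorem posterior_estimate_unbiased_general (n m : ℕ)
    {Ω : Type*} [MeasurableSpace Ω] (P : Measure Ω) [IsProbabilityMeasure P]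
    (α : ℝ) (hα0 : 0 ≤ α)
    (β : Ω → ℝ) (hβmeas : Measurable β)
    (hβ01 : ∀ ω, β ω = 0 ∨ β ω = 1)
    (hβα : P {ω | β ω = 1} = ENNReal.ofReal α)
    (x xm : Ω → (Fin n → ℝ)) (v vm : Ω → (Fin m → ℝ))
    (hx : Integrable x P) (hxm : Integrable xm P)
    (hv : Integrable v P) (hvm : Integrable vm P)
    (hvzero : (∫ ω, v ω ∂P) = 0) (hvmzero : (∫ ω, vm ω ∂P) = 0)
    (hindep : IndepFun β (fun ω => (x ω, xm ω, v ω, vm ω)) P)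
    (C Cm : Matrix (Fin m) (Fin n) ℝ) (K : Matrix (Fin n) (Fin m) ℝ)
    (xhatPred xhatPrev : Fin n → ℝ)
    (hxmean : (∫ ω, x ω ∂P) = xhatPred) (hxmmean : (∫ ω, xm ω ∂P) = xhatPrev)
    (y : Ω → (Fin m → ℝ))
    (hy : y = fun ω => (1 - β ω) • (C.mulVec (x ω) + v ω)
                      + β ω • (Cm.mulVec (xm ω) + vm ω))
    (xhatPost : Ω → (Fin n → ℝ))
    (hxhatPost : xhatPost = fun ω => xhatPred +
        K.mulVec (y ω - (1 - α) • C.mulVec xhatPred - α • Cm.mulVec xhatPrev)) :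
    (∫ ω, (x ω - xhatPost ω) ∂P) = 0 := by
  have hβint : Integrable β P := integrable_of_forall_eq_zero_or_eq_one hβmeas hβ01
  have hβmean : ∫ ω, β ω ∂P = α := by
    rw [integral_eq_measureReal_of_forall_eq_zero_or_eq_one hβmeas hβ01, measureReal_def, hβα,
      ENNReal.toReal_ofReal hα0]
  have ha : Integrable (fun ω => C *ᵥ x ω + v ω) P := (hx.matrix_mulVec C).add hv
  have hb : Integrable (fun ω => Cm *ᵥ xm ω + vm ω) P := (hxm.matrix_mulVec Cm).add hvm
  have hβa : IndepFun β (fun ω => C *ᵥ x ω + v ω) P :=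
    hindep.comp measurable_id (ψ := fun p : _ × _ × _ × _ => C *ᵥ p.1 + p.2.2.1)
      (by fun_prop)
  have hβb : IndepFun β (fun ω => Cm *ᵥ xm ω + vm ω) P :=
    hindep.comp measurable_id (ψ := fun p : _ × _ × _ × _ => Cm *ᵥ p.2.1 + p.2.2.2)
      (by fun_prop)
  have hy_int : Integrable y P := by
    rw [hy]
    exact integrable_one_sub_smul_add_smul_of_indepFun hβint ha hb hβa hβb
  have hy_mean : ∫ ω, y ω ∂P = (1 - α) • C *ᵥ xhatPred + α • Cm *ᵥ xhatPrev := by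
    rw [hy, integral_one_sub_smul_add_smul_of_indepFun hβint ha hb hβa hβb, hβmean,
      integral_add (hx.matrix_mulVec C) hv, integral_add (hxm.matrix_mulVec Cm) hvm,
      integral_matrix_mulVec C hx, integral_matrix_mulVec Cm hxm, hxmean, hxmmean, hvzero, hvmzero,
      add_zero, add_zero]
  simpa only [hxhatPost, sub_sub, hxmean, hy_mean] using
    integral_sub_add_mulVec_sub_integral K hx hy_int

/-- Unbiasedness of the posterior estimate of the risk-sensitive
filter with randomly one-step-delayed measurements. -/
theorem posterior_estimate_unbiased (n m : ℕ)
    {Ω : Type*} [MeasurableSpace Ω] (P : Measure Ω) [IsProbabilityMeasure P]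
    (α : ℝ) (hα0 : 0 ≤ α) (hα1 : α ≤ 1)
    (β : Ω → ℝ) (hβmeas : Measurable β)
    (hβ01 : ∀ ω, β ω = 0 ∨ β ω = 1)
    (hβα : P {ω | β ω = 1} = ENNReal.ofReal α)
    (x xm : Ω → (Fin n → ℝ)) (v vm : Ω → (Fin m → ℝ))
    (hxmeas : Measurable x) (hxmmeas : Measurable xm)
    (hvmeas : Measurable v) (hvmmeas : Measurable vm)
    (hx : Integrable x P) (hxm : Integrable xm P)
    (hv : Integrable v P) (hvm : Integrable vm P)
    (hvzero : (∫ ω, v ω ∂P) = 0) (hvmzero : (∫ ω, vm ω ∂P) = 0)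
    (hindep : IndepFun β (fun ω => (x ω, xm ω, v ω, vm ω)) P)
    (C Cm : Matrix (Fin m) (Fin n) ℝ) (K : Matrix (Fin n) (Fin m) ℝ)
    (xhatPred xhatPrev : Fin n → ℝ)
    (hxmean : (∫ ω, x ω ∂P) = xhatPred) (hxmmean : (∫ ω, xm ω ∂P) = xhatPrev)
    (y : Ω → (Fin m → ℝ))
    (hy : y = fun ω => (1 - β ω) • (C.mulVec (x ω) + v ω)
                      + β ω • (Cm.mulVec (xm ω) + vm ω))
    (xhatPost : Ω → (Fin n → ℝ))
    (hxhatPost : xhatPost = fun ω => xhatPred +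
        K.mulVec (y ω - (1 - α) • C.mulVec xhatPred - α • Cm.mulVec xhatPrev)) :
    (∫ ω, (x ω - xhatPost ω) ∂P) = 0 :=
  posterior_estimate_unbiased_general n m P α hα0 β hβmeas hβ01 hβα x xm v vm hx hxm hv hvm hvzero
    hvmzero hindep C Cm K xhatPred xhatPrev hxmean hxmmean y hy xhatPost hxhatPost
end
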